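/- arXiv:math/0505063 — 6 statements merged into one kernel-verified Lean document; each statement's English description precedes it below -/
import Mathlib

section
/- Let V be a finite-dimensional real normed vector space. Let C ⊆ V be a nonempty closed convex set which is locally polyhedral with convex local cones (Γ_c)_{c ∈ C}. Suppose there exist x ∈ V and a closed convex proper cone Γ ⊆ V with C ⊆ x + Γ. Then C = ⋂ {c + Γ_c : c ∈ C and Γ_c is proper}; i.e., C is completely determined by its proper local cones. -/
open Pointwise

/-- A cone in a real vector space: contains `0` and is closed under
multiplication by nonnegative real scalars. -/
def IsCone {V : Type*} [AddCommGroup V] [Module ℝ V] (Γ : Set V) : Prop :=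
  (0 : V) ∈ Γ ∧ ∀ r : ℝ, 0 ≤ r → ∀ v ∈ Γ, r • v ∈ Γ

/-- A proper cone: a cone containing no line through the origin. -/
def IsProperCone {V : Type*} [AddCommGroup V] [Module ℝ V] (Γ : Set V) : Prop :=
  IsCone Γ ∧ ∀ v ∈ Γ, -v ∈ Γ → v = 0

/-!
If `y ∉ C`, separate `y` from `C` by a functional `f` and tilt `f` by a small multiple of a
functional `g` with `‖v‖ ≤ g v` on `Γ`, which exists because `Γ` is closed and salient in finite
dimension. The tilted functional `h` still satisfies `h y < h c` for `c ∈ C`, and has compact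
sublevel sets on `C`, so it attains its minimum on `C` at an extreme point `e`. The local cone at
an extreme point is proper, so `y ∈ e + Γ_e`, and then `e + t • (y - e) ∈ C` for small `t > 0`
forces `h e ≤ h y`, a contradiction. The other inclusion holds because a convex set lies in the
translate of each of its local cones.
-/

open Filter Set Topology

section Cone

variable {V : Type*} [AddCommGroup V] [Module ℝ V] {Γ : Set V}

theorem IsCone.add_mem (hΓ : IsCone Γ) (hconv : Convex ℝ Γ) {a b : V} (ha : a ∈ Γ)
    (hb : b ∈ Γ) : a + b ∈ Γ := by
  have hmid := hconv ha hb (by norm_num : (0 : ℝ) ≤ 1 / 2) (by norm_num : (0 : ℝ) ≤ 1 / 2)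
    (by norm_num)
  convert hΓ.2 2 zero_le_two _ hmid using 1
  module

variable [TopologicalSpace V]

/-- Mathlib's `ProperCone` is a closed convex cone; unlike `IsProperCone`, it need not be
salient. -/
def IsCone.toProperCone (hΓ : IsCone Γ) (hconv : Convex ℝ Γ) (hclosed : IsClosed Γ) :
    ProperCone ℝ V where
  carrier := Γ
  add_mem' := hΓ.add_mem hconv
  zero_mem' := hΓ.1
  smul_mem' c _ hv := hΓ.2 c c.2 _ hv
  isClosed' := hclosed

end Cone

section Coercive

variable {V : Type*} [NormedAddCommGroup V] [NormedSpace ℝ V] {Γ : Set V}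

theorem IsProperCone.exists_nonneg_one_lt (hΓ : IsProperCone Γ) (hconv : Convex ℝ Γ)
    (hclosed : IsClosed Γ) {v : V} (hv : v ∈ Γ) (hv0 : v ≠ 0) :
    ∃ f : StrongDual ℝ V, (∀ w ∈ Γ, 0 ≤ f w) ∧ 1 < f v := by
  have hnv : -v ∉ hΓ.1.toProperCone hconv hclosed := fun hnv => hv0 (hΓ.2 v hv hnv)
  obtain ⟨f, hf, hfv⟩ := (hΓ.1.toProperCone hconv hclosed).hyperplane_separation_point hnv
  have hfv : 0 < f v := by simpa using hfv
  refine ⟨(2 / f v) • f, fun w hw => ?_, ?_⟩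
  · simpa using mul_nonneg (div_pos two_pos hfv).le (hf w hw)
  · simp [hfv.ne']

/-- Finitely many functionals from `exists_nonneg_one_lt` cover the compact set of unit vectors
of `Γ`; their sum is at least `1` there. -/
theorem IsProperCone.exists_norm_le [FiniteDimensional ℝ V] (hΓ : IsProperCone Γ)
    (hconv : Convex ℝ Γ) (hclosed : IsClosed Γ) :
    ∃ g : StrongDual ℝ V, ∀ v ∈ Γ, ‖v‖ ≤ g v := by
  let D := {f : StrongDual ℝ V // ∀ w ∈ Γ, 0 ≤ f w}
  have hcover : Γ ∩ Metric.sphere 0 1 ⊆ ⋃ f : D, {v | 1 < (f : StrongDual ℝ V) v} := by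
    rintro v ⟨hv, hv1⟩
    have hv0 : v ≠ 0 := ne_zero_of_mem_unit_sphere ⟨v, hv1⟩
    obtain ⟨f, hf, hfv⟩ := hΓ.exists_nonneg_one_lt hconv hclosed hv hv0
    exact mem_iUnion.2 ⟨⟨f, hf⟩, hfv⟩
  obtain ⟨t, ht⟩ := ((isCompact_sphere 0 1).inter_left hclosed).elim_finite_subcover _
    (fun f => isOpen_lt continuous_const f.1.continuous) hcover
  set g := ∑ f ∈ t, (f : StrongDual ℝ V)
  have hg : ∀ v ∈ Γ ∩ Metric.sphere 0 1, 1 ≤ g v := by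
    intro v hv
    obtain ⟨f, hft, hfv⟩ := mem_iUnion₂.1 (ht hv)
    calc 1 ≤ (f : StrongDual ℝ V) v := hfv.le
      _ ≤ ∑ f ∈ t, (f : StrongDual ℝ V) v := Finset.single_le_sum (fun f _ => f.2 v hv.1) hft
      _ = g v := by simp [g]
  refine ⟨g, fun v hv => ?_⟩
  rcases eq_or_ne v 0 with rfl | hv0
  · simp
  have hunit : ‖v‖⁻¹ • v ∈ Γ ∩ Metric.sphere 0 1 :=
    ⟨hΓ.1.2 _ (inv_nonneg.2 (norm_nonneg v)) v hv, by simp [norm_smul, hv0]⟩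
  calc ‖v‖ ≤ ‖v‖ * g (‖v‖⁻¹ • v) := le_mul_of_one_le_right (norm_nonneg v) (hg _ hunit)
    _ = g v := by simp [hv0]

end Coercive

def IsLocalCone {V : Type*} [AddGroup V] [TopologicalSpace V] (C : Set V) (c : V)
    (Γc : Set V) : Prop :=
  ∃ U ∈ 𝓝 c, C ∩ U = (c +ᵥ Γc) ∩ U

section LocalCone

variable {V : Type*} [AddCommGroup V] [Module ℝ V] [TopologicalSpace V] [ContinuousAdd V]
  [ContinuousSMul ℝ V] {C Γc : Set V} {c : V}

theorem IsLocalCone.eventually_add_smul_mem_iff (h : IsLocalCone C c Γc) (v : V) :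
    ∀ᶠ t in 𝓝[>] (0 : ℝ), c + t • v ∈ C ↔ t • v ∈ Γc := by
  obtain ⟨U, hU, hCU⟩ := h
  have hlim : Tendsto (fun t : ℝ => c + t • v) (𝓝[>] 0) (𝓝 c) := by
    have : Continuous fun t : ℝ => c + t • v := by fun_prop
    simpa using (this.tendsto 0).mono_left nhdsWithin_le_nhds
  filter_upwards [hlim hU] with t (ht : c + t • v ∈ U)
  simpa [ht, Set.mem_vadd_set_iff_neg_vadd_mem] using Set.ext_iff.1 hCU (c + t • v)

theorem IsLocalCone.eventually_add_smul_mem (h : IsLocalCone C c Γc) (hΓ : IsCone Γc) {v : V}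
    (hv : v ∈ Γc) : ∀ᶠ t in 𝓝[>] (0 : ℝ), c + t • v ∈ C := by
  filter_upwards [h.eventually_add_smul_mem_iff v, self_mem_nhdsWithin] with t ht htpos
  exact ht.2 (hΓ.2 t (le_of_lt htpos) v hv)

theorem IsLocalCone.subset_vadd (h : IsLocalCone C c Γc) (hΓ : IsCone Γc) (hconv : Convex ℝ C)
    (hc : c ∈ C) : C ⊆ c +ᵥ Γc := by
  intro z hz
  obtain ⟨t, hmem, ht⟩ := ((h.eventually_add_smul_mem_iff (z - c)).and
    (Ioo_mem_nhdsGT one_pos)).exists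
  have hscaled : t • (z - c) ∈ Γc := hmem.1 (hconv.add_smul_sub_mem hc hz ⟨ht.1.le, ht.2.le⟩)
  refine ⟨z - c, ?_, add_sub_cancel c z⟩
  simpa [smul_smul, ht.1.ne'] using hΓ.2 t⁻¹ (inv_nonneg.2 ht.1.le) _ hscaled

theorem IsLocalCone.isProperCone_of_mem_extremePoints (h : IsLocalCone C c Γc) (hΓ : IsCone Γc)
    (hc : c ∈ C.extremePoints ℝ) : IsProperCone Γc := by
  refine ⟨hΓ, fun v hv hnv => ?_⟩
  obtain ⟨t, ⟨hplus, hminus⟩, ht⟩ := ((h.eventually_add_smul_mem hΓ hv).and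
    (h.eventually_add_smul_mem hΓ hnv) |>.and self_mem_nhdsWithin).exists
  have hmid : c ∈ openSegment ℝ (c + t • v) (c + t • -v) :=
    ⟨1 / 2, 1 / 2, by norm_num, by norm_num, by norm_num, by module⟩
  have hfix : c + t • v = c := ((mem_extremePoints.1 hc).2 _ hplus _ hminus hmid).1
  simpa [(ht : 0 < t).ne'] using hfix

theorem IsLocalCone.le_of_isMinOn (h : IsLocalCone C c Γc) (hΓ : IsCone Γc) {l : V →ₗ[ℝ] ℝ}
    (hmin : IsMinOn l C c) {y : V} (hy : y ∈ c +ᵥ Γc) : l c ≤ l y := by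
  obtain ⟨v, hv, rfl⟩ := hy
  obtain ⟨t, hct, ht⟩ := ((h.eventually_add_smul_mem hΓ hv).and self_mem_nhdsWithin).exists
  have hle : l c ≤ l c + t * l v := by simpa using hmin hct
  have hlv : 0 ≤ l v := nonneg_of_mul_nonneg_right (by linarith) (ht : 0 < t)
  simpa using hlv

end LocalCone

theorem exists_isMinOn_of_isCompact_sublevel {X : Type*} [TopologicalSpace X] {C : Set X}
    {f : X → ℝ} (hf : ContinuousOn f C) {β : ℝ} (hcpt : IsCompact (C ∩ {x | f x ≤ β}))
    (hne : (C ∩ {x | f x ≤ β}).Nonempty) : ∃ x ∈ C, IsMinOn f C x := by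
  obtain ⟨x, hx, hmin⟩ := hcpt.exists_isMinOn hne (hf.mono inter_subset_left)
  refine ⟨x, hx.1, fun z hz => ?_⟩
  by_cases hzβ : f z ≤ β
  · exact hmin ⟨hz, hzβ⟩
  · exact hx.2.trans (le_of_not_ge hzβ)

section Separation

variable {V : Type*} [NormedAddCommGroup V] [NormedSpace ℝ V]

/-- The minimizers of `h` on `C` form a compact exposed face of `C`, whose extreme points are
extreme points of `C`. -/
theorem exists_mem_extremePoints_isMinOn {C : Set V} (hC : IsClosed C) (hne : C.Nonempty)
    (h : StrongDual ℝ V) (hcpt : ∀ β, IsCompact (C ∩ {x | h x ≤ β})) :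
    ∃ e ∈ C.extremePoints ℝ, IsMinOn h C e := by
  obtain ⟨z, hz⟩ := hne
  obtain ⟨c, hc, hmin⟩ := exists_isMinOn_of_isCompact_sublevel h.continuous.continuousOn
    (hcpt (h z)) ⟨z, hz, le_refl (h z)⟩
  set F := (-h).toExposed C
  have hF : IsExposed ℝ C F := ContinuousLinearMap.toExposed.isExposed
  have hminF : ∀ x ∈ F, IsMinOn h C x := fun x hx y hy => by simpa using hx.2 y hy
  have hFcpt : IsCompact F := (hcpt (h z)).of_isClosed_subset (hF.isClosed hC) fun x hx =>
    ⟨hx.1, show h x ≤ h z from hminF x hx hz⟩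
  obtain ⟨e, he⟩ := hFcpt.extremePoints_nonempty ⟨c, hc, fun y hy => by simpa using hmin hy⟩
  exact ⟨e, hF.isExtreme.extremePoints_subset_extremePoints he, hminF e he.1⟩

/-- Tilting a separating functional `f` by a small multiple of `g` keeps it separating, and makes
it grow like `‖c - x‖` on `C`. -/
theorem exists_forall_lt_and_isCompact_sublevel [FiniteDimensional ℝ V] {C Γ : Set V}
    (hC : IsClosed C) (hconv : Convex ℝ C) {x : V} (hsub : C ⊆ x +ᵥ Γ) {g : StrongDual ℝ V}
    (hg : ∀ v ∈ Γ, ‖v‖ ≤ g v) {y : V} (hy : y ∉ C) :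
    ∃ h : StrongDual ℝ V, (∀ c ∈ C, h y < h c) ∧ ∀ β, IsCompact (C ∩ {c | h c ≤ β}) := by
  obtain ⟨f, α, hfy, hfC⟩ := geometric_hahn_banach_point_closed hconv hC hy
  obtain ⟨s, hs, hsy⟩ := exists_pos_mul_lt (sub_pos.2 hfy) (g y - g x)
  have hgC : ∀ c ∈ C, g x + ‖c - x‖ ≤ g c := by
    intro c hc
    obtain ⟨v, hv, rfl⟩ := hsub hc
    simpa using hg v hv
  have hlow : ∀ c ∈ C, α + s * (g x + ‖c - x‖) < (f + s • g) c := by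
    intro c hc
    simpa using add_lt_add_of_lt_of_le (hfC c hc) (mul_le_mul_of_nonneg_left (hgC c hc) hs.le)
  refine ⟨f + s • g, fun c hc => ?_, fun β => ?_⟩
  · have hyx : (f + s • g) y < α + s * g x := by
      simp only [add_apply, smul_apply, smul_eq_mul]
      linarith
    nlinarith [hlow c hc, norm_nonneg (c - x)]
  · refine (isCompact_closedBall x ((β - α) / s - g x)).of_isClosed_subset
      (hC.inter (isClosed_le (f + s • g).continuous continuous_const)) ?_
    rintro c ⟨hc, hcβ : (f + s • g) c ≤ β⟩
    rw [Metric.mem_closedBall, dist_eq_norm, le_sub_iff_add_le, le_div_iff₀ hs]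
    nlinarith [hlow c hc]

end Separation

theorem closed_convex_locally_polyhedral_eq_iInter_proper_local_cones_general
    {V : Type*} [NormedAddCommGroup V] [NormedSpace ℝ V] [FiniteDimensional ℝ V]
    (C : Set V) (hne : C.Nonempty) (hclosed : IsClosed C) (hconv : Convex ℝ C)
    (Γloc : V → Set V)
    (hΓcone : ∀ c ∈ C, IsCone (Γloc c))
    (hlocal : ∀ c ∈ C, ∃ U ∈ nhds c, C ∩ U = (c +ᵥ Γloc c) ∩ U)
    (x : V) (Γ : Set V) (hΓclosed : IsClosed Γ) (hΓconvex : Convex ℝ Γ)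
    (hΓproper : IsProperCone Γ)
    (hsub : C ⊆ x +ᵥ Γ) :
    C = ⋂ c ∈ {c ∈ C | IsProperCone (Γloc c)}, (c +ᵥ Γloc c) := by
  refine subset_antisymm (fun z hz => mem_iInter₂.2 fun c hc =>
    IsLocalCone.subset_vadd (hlocal c hc.1) (hΓcone c hc.1) hconv hc.1 hz) fun y hy => ?_
  by_contra hyC
  obtain ⟨g, hg⟩ := hΓproper.exists_norm_le hΓconvex hΓclosed
  obtain ⟨h, hlt, hcpt⟩ := exists_forall_lt_and_isCompact_sublevel hclosed hconv hsub hg hyC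
  obtain ⟨e, he, hmin⟩ := exists_mem_extremePoints_isMinOn hclosed hne h hcpt
  have heC : e ∈ C := he.1
  have hproper : IsProperCone (Γloc e) :=
    IsLocalCone.isProperCone_of_mem_extremePoints (hlocal e heC) (hΓcone e heC) he
  have hle : h e ≤ h y := IsLocalCone.le_of_isMinOn (hlocal e heC) (hΓcone e heC) hmin
    (mem_iInter₂.1 hy e ⟨heC, hproper⟩)
  exact (hlt e heC).not_ge hle

/-- Proposition 4.6: a nonempty closed convex locally polyhedral set contained in a
translate of a closed convex proper cone is the intersection of its proper local cones. -/
theorem closed_convex_locally_polyhedral_eq_iInter_proper_local_cones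
    {V : Type*} [NormedAddCommGroup V] [NormedSpace ℝ V] [FiniteDimensional ℝ V]
    (C : Set V) (hne : C.Nonempty) (hclosed : IsClosed C) (hconv : Convex ℝ C)
    (Γloc : V → Set V)
    (hΓcone : ∀ c ∈ C, IsCone (Γloc c))
    (hΓconv : ∀ c ∈ C, Convex ℝ (Γloc c))
    (hlocal : ∀ c ∈ C, ∃ U ∈ nhds c, C ∩ U = (c +ᵥ Γloc c) ∩ U)
    (x : V) (Γ : Set V) (hΓclosed : IsClosed Γ) (hΓconvex : Convex ℝ Γ)
    (hΓproper : IsProperCone Γ)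
    (hsub : C ⊆ x +ᵥ Γ) :
    C = ⋂ c ∈ {c ∈ C | IsProperCone (Γloc c)}, (c +ᵥ Γloc c) :=
  closed_convex_locally_polyhedral_eq_iInter_proper_local_cones_general C hne hclosed hconv Γloc
    hΓcone hlocal x Γ hΓclosed hΓconvex hΓproper hsub
end

section
/- Let V be a finite-dimensional real normed vector space and C ⊆ V a nonempty closed convex set which is locally polyhedral with convex local cones (Γ_c)_{c ∈ C}. Then C = ⋂_{c ∈ C} (c + Γ_c), the intersection over all points c ∈ C of the translated local cones. -/
/-!
A local cone `Γ_c` consists exactly of the directions `v` along which `c + t • v` stays in `C`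
for all small `t > 0`. Convexity makes `x - c` such a direction for every `x ∈ C`, whence
`C ⊆ c +ᵥ Γ_c`. Conversely, if `x` lies in every `c +ᵥ Γ_c`, then from each point of `C` on a
segment `[a, x]` with `a ∈ C` one can move a little further towards `x` without leaving `C`;
as `C` is closed, continuous induction along the segment puts `x` in `C`.
-/

open Pointwise

open Filter Topology Set

theorem Set.mem_vadd_set_iff_sub_mem {V : Type*} [AddCommGroup V] {Γ : Set V} {c x : V} :
    x ∈ c +ᵥ Γ ↔ x - c ∈ Γ := by
  rw [mem_vadd_set_iff_neg_vadd_mem, vadd_eq_add, neg_add_eq_sub]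

section

variable {V : Type*} [AddCommGroup V] [Module ℝ V] [TopologicalSpace V] [ContinuousAdd V]
  [ContinuousSMul ℝ V]

theorem IsCone.mem_iff_eventually_add_smul_mem {C Γ U : Set V} {c : V} (hΓ : IsCone Γ)
    (hU : U ∈ 𝓝 c) (hCU : C ∩ U = (c +ᵥ Γ) ∩ U) (v : V) :
    v ∈ Γ ↔ ∀ᶠ t in 𝓝[>] (0 : ℝ), c + t • v ∈ C := by
  have hnear : ∀ᶠ t in 𝓝[>] (0 : ℝ), c + t • v ∈ U := by
    have : Tendsto (fun t : ℝ ↦ c + t • v) (𝓝 0) (𝓝 c) := by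
      simpa using ((tendsto_id (x := 𝓝 (0 : ℝ))).smul_const v).const_add c
    exact (this.mono_left nhdsWithin_le_nhds).eventually_mem hU
  constructor
  · intro hv
    filter_upwards [hnear, self_mem_nhdsWithin] with t htU (ht : 0 < t)
    have : c + t • v ∈ (c +ᵥ Γ) ∩ U := ⟨vadd_mem_vadd_set (hΓ.2 t ht.le v hv), htU⟩
    exact (hCU ▸ this).1
  · intro h
    obtain ⟨t, ⟨htC, htU⟩, ht : 0 < t⟩ := ((h.and hnear).and self_mem_nhdsWithin).exists
    have htv : t • v ∈ Γ := vadd_mem_vadd_set_iff.1 (hCU ▸ ⟨htC, htU⟩ : _ ∈ (c +ᵥ Γ) ∩ U).1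
    simpa [smul_smul, ht.ne'] using hΓ.2 t⁻¹ (inv_nonneg.2 ht.le) _ htv

theorem Convex.subset_vadd_of_inter_nhds_eq {C Γ U : Set V} {c : V} (hC : Convex ℝ C)
    (hc : c ∈ C) (hΓ : IsCone Γ) (hU : U ∈ 𝓝 c) (hCU : C ∩ U = (c +ᵥ Γ) ∩ U) :
    C ⊆ c +ᵥ Γ := by
  intro x hx
  have hseg : ∀ᶠ t in 𝓝[>] (0 : ℝ), c + t • (x - c) ∈ C := by
    filter_upwards [Ioo_mem_nhdsGT one_pos] with t ht
    exact hC.add_smul_sub_mem hc hx ⟨ht.1.le, ht.2.le⟩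
  exact mem_vadd_set_iff_sub_mem.2 ((hΓ.mem_iff_eventually_add_smul_mem hU hCU _).2 hseg)

theorem IsClosed.mem_of_forall_eventually_add_smul_sub_mem {C : Set V} {a x : V}
    (hC : IsClosed C) (ha : a ∈ C)
    (hstep : ∀ c ∈ C, ∀ᶠ t in 𝓝[>] (0 : ℝ), c + t • (x - c) ∈ C) : x ∈ C := by
  set f : ℝ → V := fun t ↦ a + t • (x - a)
  have hf : Continuous f := continuous_const.add (continuous_id.smul continuous_const)
  suffices Icc 0 1 ⊆ f ⁻¹' C by simpa [f] using this (right_mem_Icc.2 zero_le_one)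
  refine ((hC.preimage hf).inter isClosed_Icc).Icc_subset_of_forall_mem_nhdsWithin
    (by simpa [f] using ha) ?_
  rintro τ ⟨hτC, -, hτ1⟩
  have hpos : 0 < 1 - τ := sub_pos.2 hτ1
  have hscaled := eventually_nhdsGT_zero_mul_left (inv_pos.2 hpos) (hstep (f τ) hτC)
  rw [← add_zero τ, ← map_add_left_nhdsGT, mem_map]
  filter_upwards [hscaled] with r hr
  have hxf : x - f τ = (1 - τ) • (x - a) := by simp only [f]; module
  have hr' : (1 - τ)⁻¹ * r * (1 - τ) = r := by field_simp
  rw [hxf, smul_smul, hr'] at hr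
  simpa only [mem_preimage, f, add_smul, add_assoc] using hr

end

theorem closed_convex_locally_polyhedral_eq_iInter_local_cones_general
    {V : Type*} [NormedAddCommGroup V] [NormedSpace ℝ V]
    (C : Set V) (hne : C.Nonempty) (hclosed : IsClosed C) (hconv : Convex ℝ C)
    (Γloc : V → Set V)
    (hΓcone : ∀ c ∈ C, IsCone (Γloc c))
    (hlocal : ∀ c ∈ C, ∃ U ∈ nhds c, C ∩ U = (c +ᵥ Γloc c) ∩ U) :
    C = ⋂ c ∈ C, (c +ᵥ Γloc c) := by
  choose U hU hCU using hlocal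
  refine Subset.antisymm (subset_iInter₂ fun c hc ↦
    hconv.subset_vadd_of_inter_nhds_eq hc (hΓcone c hc) (hU c hc) (hCU c hc)) fun x hx ↦ ?_
  obtain ⟨a, ha⟩ := hne
  refine hclosed.mem_of_forall_eventually_add_smul_sub_mem ha fun c hc ↦ ?_
  exact ((hΓcone c hc).mem_iff_eventually_add_smul_mem (hU c hc) (hCU c hc) _).1
    (mem_vadd_set_iff_sub_mem.1 (mem_iInter₂.1 hx c hc))

/-- A nonempty closed convex locally polyhedral set is the intersection of all of its
translated local cones. -/
theorem closed_convex_locally_polyhedral_eq_iInter_local_cones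
    {V : Type*} [NormedAddCommGroup V] [NormedSpace ℝ V] [FiniteDimensional ℝ V]
    (C : Set V) (hne : C.Nonempty) (hclosed : IsClosed C) (hconv : Convex ℝ C)
    (Γloc : V → Set V)
    (hΓcone : ∀ c ∈ C, IsCone (Γloc c))
    (hΓconv : ∀ c ∈ C, Convex ℝ (Γloc c))
    (hlocal : ∀ c ∈ C, ∃ U ∈ nhds c, C ∩ U = (c +ᵥ Γloc c) ∩ U) :
    C = ⋂ c ∈ C, (c +ᵥ Γloc c) :=
  closed_convex_locally_polyhedral_eq_iInter_local_cones_general C hne hclosed hconv Γloc hΓcone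
    hlocal
end

section
/- Let V be a real topological vector space and C ⊆ V a convex set. Let a, b ∈ C, let λ ∈ (0,1), and set z = (1−λ)a + λb. Suppose there are cones Γ_a, Γ_z ⊆ V and neighborhoods U_a of a and U_z of z with C ∩ U_a = (a + Γ_a) ∩ U_a and C ∩ U_z = (z + Γ_z) ∩ U_z. If v ∈ Γ_a and −v ∈ Γ_a, then v ∈ Γ_z and −v ∈ Γ_z; i.e., every line contained in the local cone at an endpoint of a segment in C is contained in the local cone at each inner point of the segment. -/
open Pointwise

open Filter Topology

/-!
Since `C` agrees with `p + Γ` near `p`, a cone `Γ` consists exactly of the directions `w` with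
`p + t • w ∈ C` for all small `t > 0`. If `a + t • w ∈ C`, convexity puts
`(1 - λ) • (a + t • w) + λ • b = z + ((1 - λ) * t) • w` in `C`, and `1 - λ > 0`; so every
direction of `Γa`, in particular both directions of a line, is a direction of `Γz`.
-/
section LocalCone

variable {V : Type*} [AddCommGroup V] [Module ℝ V]

theorem IsCone.smul_mem_iff {Γ : Set V} (hΓ : IsCone Γ) {c : ℝ} (hc : 0 < c) {w : V} :
    c • w ∈ Γ ↔ w ∈ Γ := by
  refine ⟨fun h ↦ ?_, hΓ.2 c hc.le w⟩
  simpa [smul_smul, inv_mul_cancel₀ hc.ne'] using hΓ.2 c⁻¹ (inv_nonneg.2 hc.le) _ h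

variable [TopologicalSpace V] [IsTopologicalAddGroup V] [ContinuousSMul ℝ V]

theorem eventually_add_smul_mem_iff_of_local_eq {C Γ U : Set V} {p : V} (hU : U ∈ 𝓝 p)
    (hloc : C ∩ U = (p +ᵥ Γ) ∩ U) (w : V) :
    ∀ᶠ t in 𝓝 (0 : ℝ), p + t • w ∈ C ↔ t • w ∈ Γ := by
  have hcont : Tendsto (fun t : ℝ ↦ p + t • w) (𝓝 0) (𝓝 p) :=
    (continuous_const.add (continuous_id.smul continuous_const)).tendsto' 0 p (by simp)
  filter_upwards [hcont hU] with t (htU : p + t • w ∈ U)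
  have hmem := Set.ext_iff.1 hloc (p + t • w)
  simp only [Set.mem_inter_iff, htU, and_true] at hmem
  rwa [← vadd_eq_add, Set.vadd_mem_vadd_set_iff] at hmem

theorem IsCone.eventually_add_smul_mem {C Γ U : Set V} {p w : V} (hΓ : IsCone Γ)
    (hU : U ∈ 𝓝 p) (hloc : C ∩ U = (p +ᵥ Γ) ∩ U) (hw : w ∈ Γ) :
    ∀ᶠ t in 𝓝[>] (0 : ℝ), p + t • w ∈ C := by
  filter_upwards [(eventually_add_smul_mem_iff_of_local_eq hU hloc w).filter_mono
    nhdsWithin_le_nhds, self_mem_nhdsWithin] with t ht htpos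
  exact ht.2 (hΓ.2 t htpos.le w hw)

theorem IsCone.mem_of_frequently_add_smul_mem {C Γ U : Set V} {p w : V} (hΓ : IsCone Γ)
    (hU : U ∈ 𝓝 p) (hloc : C ∩ U = (p +ᵥ Γ) ∩ U)
    (h : ∃ᶠ t in 𝓝[>] (0 : ℝ), p + t • w ∈ C) : w ∈ Γ := by
  obtain ⟨t, hC, hiff, htpos⟩ :=
    (h.and_eventually (((eventually_add_smul_mem_iff_of_local_eq hU hloc w).filter_mono
      nhdsWithin_le_nhds).and self_mem_nhdsWithin)).exists
  exact (hΓ.smul_mem_iff htpos).1 (hiff.1 hC)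

theorem local_cone_subset_at_inner_point {C : Set V} (hconv : Convex ℝ C)
    {a b z : V} (hb : b ∈ C) {lam : ℝ} (hlam0 : 0 < lam) (hlam1 : lam < 1)
    (hz : z = (1 - lam) • a + lam • b) {Γa Γz Ua Uz : Set V} (hΓa : IsCone Γa) (hΓz : IsCone Γz)
    (hUa : Ua ∈ 𝓝 a) (hlocala : C ∩ Ua = (a +ᵥ Γa) ∩ Ua)
    (hUz : Uz ∈ 𝓝 z) (hlocalz : C ∩ Uz = (z +ᵥ Γz) ∩ Uz) : Γa ⊆ Γz := by
  intro w hw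
  have hμ : 0 < 1 - lam := sub_pos.2 hlam1
  refine (hΓz.smul_mem_iff hμ).1 (hΓz.mem_of_frequently_add_smul_mem hUz hlocalz ?_)
  refine ((hΓa.eventually_add_smul_mem hUa hlocala hw).mono fun t ht ↦ ?_).frequently
  have hcomb : (1 - lam) • (a + t • w) + lam • b = z + t • (1 - lam) • w := by
    rw [hz, smul_add, smul_comm (1 - lam) t w]
    abel
  exact hcomb ▸ hconv ht hb hμ.le hlam0.le (sub_add_cancel 1 lam)

end LocalCone

theorem line_in_local_cone_of_inner_point_general
    {V : Type*} [AddCommGroup V] [Module ℝ V] [TopologicalSpace V]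
    [IsTopologicalAddGroup V] [ContinuousSMul ℝ V]
    (C : Set V) (hconv : Convex ℝ C)
    (a b : V) (hb : b ∈ C)
    (lam : ℝ) (hlam0 : 0 < lam) (hlam1 : lam < 1)
    (z : V) (hz : z = (1 - lam) • a + lam • b)
    (Γa Γz : Set V) (hΓa : IsCone Γa) (hΓz : IsCone Γz)
    (Ua : Set V) (hUa : Ua ∈ nhds a) (hlocala : C ∩ Ua = (a +ᵥ Γa) ∩ Ua)
    (Uz : Set V) (hUz : Uz ∈ nhds z) (hlocalz : C ∩ Uz = (z +ᵥ Γz) ∩ Uz)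
    (v : V) (hv : v ∈ Γa) (hv' : -v ∈ Γa) :
    v ∈ Γz ∧ -v ∈ Γz := by
  have hsub : Γa ⊆ Γz := local_cone_subset_at_inner_point hconv hb hlam0 hlam1 hz hΓa hΓz
    hUa hlocala hUz hlocalz
  exact ⟨hsub hv, hsub hv'⟩

/-- Every line contained in the local cone at an endpoint of a segment inside a convex
set is contained in the local cone at each inner point of the segment. -/
theorem line_in_local_cone_of_inner_point
    {V : Type*} [AddCommGroup V] [Module ℝ V] [TopologicalSpace V]
    [IsTopologicalAddGroup V] [ContinuousSMul ℝ V]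
    (C : Set V) (hconv : Convex ℝ C)
    (a b : V) (ha : a ∈ C) (hb : b ∈ C)
    (lam : ℝ) (hlam0 : 0 < lam) (hlam1 : lam < 1)
    (z : V) (hz : z = (1 - lam) • a + lam • b)
    (Γa Γz : Set V) (hΓa : IsCone Γa) (hΓz : IsCone Γz)
    (Ua : Set V) (hUa : Ua ∈ nhds a) (hlocala : C ∩ Ua = (a +ᵥ Γa) ∩ Ua)
    (Uz : Set V) (hUz : Uz ∈ nhds z) (hlocalz : C ∩ Uz = (z +ᵥ Γz) ∩ Uz)
    (v : V) (hv : v ∈ Γa) (hv' : -v ∈ Γa) :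
    v ∈ Γz ∧ -v ∈ Γz :=
  line_in_local_cone_of_inner_point_general C hconv a b hb lam hlam0 hlam1 z hz Γa Γz hΓa hΓz Ua hUa
    hlocala Uz hUz hlocalz v hv hv'
end

section
/- Let V be a finite-dimensional real normed vector space, F ⊆ V a finite nonempty set, and S ⊆ V a finite set such that the cone cone(S) generated by S is proper (contains no line through the origin). Then conv(F) + cone(S) = ⋂_{v ∈ F} ( v + cone({w − v : w ∈ F} ∪ S) ), i.e. the sum of the polytope conv(F) and the cone cone(S) equals the intersection over all v ∈ F of the translated cones generated by the differences F − v together with S. -/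
/-!
The inclusion `⊆` holds for every `v`: if `p ∈ conv F` then `p - v` lies in the cone spanned by
`F - v`. For `⊇`, the set `conv F + cone S` is convex and closed, because a salient cone spanned by
finitely many nonzero vectors is the cone over the compact base `conv (S \ {0})`, which some
functional `f` keeps positive, so its slices `{f ≤ R}` are compact. A point `x` outside is thus
strictly separated from `conv F + cone S` by a functional `f` bounded above on it; then `f ≤ 0` on
`cone S`, and for `v ∈ F` maximizing `f` on `F` also `f ≤ 0` on `F - v`. Hence
`x ∈ v + cone ((F - v) ∪ S)` forces `f x ≤ f v`, a contradiction.
-/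

open Pointwise

/-- The cone generated by a set `S`: all finite nonnegative linear combinations of
elements of `S`. -/
def coneGen {V : Type*} [AddCommGroup V] [Module ℝ V] (S : Set V) : Set V :=
  { v | ∃ (n : ℕ) (c : Fin n → ℝ) (s : Fin n → V),
      (∀ i, 0 ≤ c i) ∧ (∀ i, s i ∈ S) ∧ v = ∑ i, c i • s i }

open Set PointedCone

theorem coneGen_eq_hull {V : Type*} [AddCommGroup V] [Module ℝ V] (S : Set V) :
    coneGen S = hull ℝ S := by
  ext x
  simp only [coneGen, mem_ofPred_eq, SetLike.mem_coe, Submodule.mem_span_set']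
  constructor
  · rintro ⟨n, c, s, hc, hs, rfl⟩
    exact ⟨n, fun i => ⟨c i, hc i⟩, fun i => ⟨s i, hs i⟩, rfl⟩
  · rintro ⟨n, c, s, rfl⟩
    exact ⟨n, fun i => c i, fun i => s i, fun i => (c i).2, fun i => (s i).2, rfl⟩

theorem isClosed_of_forall_isClosed_inter_preimage_Iic {X : Type*} [TopologicalSpace X]
    {s : Set X} {g : X → ℝ} (hg : Continuous g) (h : ∀ R, IsClosed (s ∩ g ⁻¹' Iic R)) :
    IsClosed s := by
  refine closure_subset_iff_isClosed.1 fun x hx => ?_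
  have hx' : x ∈ closure (g ⁻¹' Iio (g x + 1) ∩ s) :=
    (isOpen_Iio.preimage hg).inter_closure ⟨by simp, hx⟩
  have hsub : g ⁻¹' Iio (g x + 1) ∩ s ⊆ s ∩ g ⁻¹' Iic (g x + 1) :=
    fun y hy => ⟨hy.2, preimage_mono Iio_subset_Iic_self hy.1⟩
  exact ((h _).closure_subset_iff.2 hsub hx').1

namespace PointedCone

section Algebra

variable {𝕜 V : Type*} [Field 𝕜] [LinearOrder 𝕜] [IsStrictOrderedRing 𝕜]
  [AddCommGroup V] [Module 𝕜 V]

theorem hull_sdiff_zero (S : Set V) : hull 𝕜 (S \ {0}) = hull 𝕜 S :=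
  Submodule.span_sdiff_singleton_zero

theorem convexHull_subset_hull (S : Set V) : convexHull 𝕜 S ⊆ hull 𝕜 S :=
  convexHull_min subset_hull (hull 𝕜 S).convex

theorem coe_hull_eq_image_smul_convexHull {S : Set V} (hS : S.Nonempty) :
    (hull 𝕜 S : Set V) = (fun p : 𝕜 × V => p.1 • p.2) '' (Ici 0 ×ˢ convexHull 𝕜 S) := by
  refine Subset.antisymm (fun x hx => ?_) ?_
  · induction hx using Submodule.span_induction with
    | mem x hx =>
      exact ⟨(1, x), ⟨zero_le_one, subset_convexHull 𝕜 S hx⟩, one_smul 𝕜 x⟩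
    | zero =>
      obtain ⟨s, hs⟩ := hS
      exact ⟨(0, s), ⟨le_rfl, subset_convexHull 𝕜 S hs⟩, zero_smul 𝕜 s⟩
    | add x y _ _ hx hy =>
      obtain ⟨⟨s, k⟩, ⟨hs, hk⟩, rfl⟩ := hx
      obtain ⟨⟨t, l⟩, ⟨ht, hl⟩, rfl⟩ := hy
      obtain ⟨m, hm, hkl⟩ : s • k + t • l ∈ (s + t) • convexHull 𝕜 S := by
        rw [(convex_convexHull 𝕜 S).add_smul hs ht]
        exact add_mem_add (smul_mem_smul_set hk) (smul_mem_smul_set hl)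
      exact ⟨(s + t, m), ⟨add_nonneg hs ht, hm⟩, hkl⟩
    | smul a x _ hx =>
      obtain ⟨⟨t, k⟩, ⟨ht, hk⟩, rfl⟩ := hx
      exact ⟨(a * t, k), ⟨mul_nonneg a.2 ht, hk⟩, by simp [mul_smul]⟩
  · rintro _ ⟨⟨t, k⟩, ⟨ht, hk⟩, rfl⟩
    exact (hull 𝕜 S).smul_mem ht (convexHull_subset_hull S hk)

theorem eq_zero_of_sum_eq_zero {C : PointedCone 𝕜 V} (hC : ∀ u ∈ C, -u ∈ C → u = 0)
    {ι : Type*} {t : Finset ι} {f : ι → V} (hf : ∀ i ∈ t, f i ∈ C)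
    (hsum : ∑ i ∈ t, f i = 0) : ∀ i ∈ t, f i = 0 := by
  classical
  intro i hi
  rw [← Finset.add_sum_erase t f hi, add_eq_zero_iff_neg_eq] at hsum
  exact hC _ (hf i hi) (hsum ▸ C.sum_mem fun j hj => hf j (Finset.mem_of_mem_erase hj))

theorem zero_notMem_convexHull_of_salient {S : Set V} (hS : S.Finite)
    (hsalient : ∀ u ∈ hull 𝕜 S, -u ∈ hull 𝕜 S → u = 0) (h0 : (0 : V) ∉ S) :
    (0 : V) ∉ convexHull 𝕜 S := by
  rw [← hS.coe_toFinset, Finset.mem_convexHull']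
  rintro ⟨w, hw0, hw1, hsum⟩
  have hterm : ∀ y ∈ hS.toFinset, w y • y ∈ hull 𝕜 S := fun y hy =>
    (hull 𝕜 S).smul_mem (hw0 y hy) (subset_hull (hS.mem_toFinset.1 hy))
  obtain ⟨y, hy, hwy⟩ := Finset.exists_ne_zero_of_sum_ne_zero (hw1.symm ▸ one_ne_zero)
  have hwy0 : w y • y = 0 := eq_zero_of_sum_eq_zero hsalient hterm hsum y hy
  exact h0 ((smul_eq_zero.1 hwy0).resolve_left hwy ▸ hS.mem_toFinset.1 hy)

theorem apply_nonpos_of_mem_hull (f : V →ₗ[𝕜] 𝕜) {S : Set V} (hS : ∀ s ∈ S, f s ≤ 0)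
    {x : V} (hx : x ∈ hull 𝕜 S) : f x ≤ 0 := by
  induction hx using Submodule.span_induction with
  | mem x hx => exact hS x hx
  | zero => simp
  | add x y _ _ hx hy => simpa only [map_add] using add_nonpos hx hy
  | smul a x _ hx =>
    rw [← Nonneg.coe_smul, map_smul, smul_eq_mul]
    exact mul_nonpos_of_nonneg_of_nonpos a.2 hx

theorem apply_nonpos_of_add_le (C : PointedCone 𝕜 V) (f : V →ₗ[𝕜] 𝕜) {a : V} {u : 𝕜}
    (h : ∀ c ∈ C, f (a + c) ≤ u) {c : V} (hc : c ∈ C) : f c ≤ 0 := by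
  by_contra! hpos
  have := h (((|u - f a| + 1) / f c) • c) (C.smul_mem (by positivity) hc)
  rw [map_add, map_smul, smul_eq_mul, div_mul_cancel₀ _ hpos.ne'] at this
  linarith [le_abs_self (u - f a)]

theorem convexHull_add_hull_subset_vadd_hull (F S : Set V) (v : V) :
    convexHull 𝕜 F + hull 𝕜 S ⊆ v +ᵥ (hull 𝕜 ((fun w => w - v) '' F ∪ S) : Set V) := by
  rintro _ ⟨p, hp, c, hc, rfl⟩
  have hpv : p - v ∈ convexHull 𝕜 ((fun w => w - v) '' F) := by
    have himage : (fun w => w - v) '' F = -v +ᵥ F := by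
      simp only [← image_vadd, vadd_eq_add, neg_add_eq_sub]
    rw [himage, convexHull_vadd]
    exact ⟨p, hp, neg_add_eq_sub v p⟩
  rw [mem_vadd_set_iff_neg_vadd_mem, vadd_eq_add, ← add_assoc, neg_add_eq_sub]
  exact add_mem (Submodule.span_mono subset_union_left (convexHull_subset_hull _ hpv))
    (Submodule.span_mono subset_union_right hc)

end Algebra

end PointedCone

section Topology

variable {V : Type*} [TopologicalSpace V] [AddCommGroup V] [Module ℝ V] [ContinuousSMul ℝ V]

theorem isClosed_image_smul_Ici_prod [T2Space V] {K : Set V} (hK : IsCompact K)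
    (f : StrongDual ℝ V) {b : ℝ} (hb : 0 < b) (hfK : ∀ k ∈ K, b < f k) :
    IsClosed ((fun p : ℝ × V => p.1 • p.2) '' (Ici 0 ×ˢ K)) := by
  refine isClosed_of_forall_isClosed_inter_preimage_Iic f.continuous fun R => ?_
  have hslice : (fun p : ℝ × V => p.1 • p.2) '' (Ici 0 ×ˢ K) ∩ f ⁻¹' Iic R =
      (fun p : ℝ × V => p.1 • p.2) '' (Icc 0 (R / b) ×ˢ K) ∩ f ⁻¹' Iic R := by
    refine Subset.antisymm ?_ (inter_subset_inter_left _ (image_mono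
      (prod_mono Icc_subset_Ici_self Subset.rfl)))
    rintro _ ⟨⟨⟨t, k⟩, ⟨ht, hk⟩, rfl⟩, hR⟩
    have hR' : t * f k ≤ R := by simpa using hR
    refine ⟨⟨(t, k), ⟨⟨ht, ?_⟩, hk⟩, rfl⟩, hR⟩
    rw [le_div_iff₀ hb]
    nlinarith [hfK k hk, mem_Ici.1 ht]
  rw [hslice]
  exact ((isCompact_Icc.prod hK).image (continuous_fst.smul continuous_snd)).isClosed.inter
    (isClosed_Iic.preimage f.continuous)

variable [IsTopologicalAddGroup V] [LocallyConvexSpace ℝ V]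

theorem PointedCone.isClosed_hull_of_finite [T2Space V] {S : Set V} (hS : S.Finite)
    (hsalient : ∀ u ∈ hull ℝ S, -u ∈ hull ℝ S → u = 0) : IsClosed (hull ℝ S : Set V) := by
  rw [← hull_sdiff_zero] at hsalient ⊢
  rcases (S \ {0}).eq_empty_or_nonempty with hempty | hne
  · simp only [hempty, Submodule.span_empty, Submodule.bot_coe, isClosed_singleton]
  have hK : IsCompact (convexHull ℝ (S \ {0})) := hS.sdiff.isCompact_convexHull (𝕜 := ℝ)
  obtain ⟨f, u, hu0, hu⟩ := geometric_hahn_banach_point_closed (convex_convexHull ℝ _)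
    hK.isClosed (zero_notMem_convexHull_of_salient hS.sdiff hsalient (fun h => h.2 rfl))
  rw [coe_hull_eq_image_smul_convexHull hne]
  exact isClosed_image_smul_Ici_prod hK f (by simpa using hu0) hu

theorem PointedCone.iInter_vadd_hull_subset_convexHull_add_hull {F S : Set V} (hF : F.Finite)
    (hFne : F.Nonempty) (hS : IsClosed (hull ℝ S : Set V)) :
    ⋂ v ∈ F, v +ᵥ (hull ℝ ((fun w => w - v) '' F ∪ S) : Set V) ⊆
      convexHull ℝ F + hull ℝ S := by
  intro x hx
  by_contra hxP
  obtain ⟨f, u, hu, hux⟩ := geometric_hahn_banach_closed_point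
    ((convex_convexHull ℝ F).add (hull ℝ S).convex)
    (hS.add_left_of_isCompact (hF.isCompact_convexHull (𝕜 := ℝ))) hxP
  obtain ⟨v, hvF, hvmax⟩ := exists_max_image F f hF hFne
  have hvC : ∀ c ∈ hull ℝ S, f (v + c) < u := fun c hc =>
    hu _ (add_mem_add (subset_convexHull ℝ F hvF) hc)
  have hgen : ∀ g ∈ (fun w => w - v) '' F ∪ S, f g ≤ 0 := by
    rintro _ (⟨w, hw, rfl⟩ | hg)
    · simpa using hvmax w hw
    · exact apply_nonpos_of_add_le (hull ℝ S) f.toLinearMap (fun c hc => (hvC c hc).le)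
        (subset_hull hg)
  have hxv : f (-v + x) ≤ 0 := apply_nonpos_of_mem_hull f.toLinearMap hgen
    (mem_vadd_set_iff_neg_vadd_mem.1 (mem_iInter₂.1 hx v hvF))
  have hv : f v < u := by simpa using hvC 0 (zero_mem _)
  simp only [map_add, map_neg] at hxv
  linarith

end Topology

theorem polytope_add_proper_cone_eq_iInter_general
    {V : Type*} [NormedAddCommGroup V] [NormedSpace ℝ V]
    (F : Set V) (hFfin : F.Finite) (hFne : F.Nonempty)
    (S : Set V) (hSfin : S.Finite)
    (hproper : ∀ u ∈ coneGen S, -u ∈ coneGen S → u = 0) :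
    convexHull ℝ F + coneGen S =
      ⋂ v ∈ F, (v +ᵥ coneGen ((fun w => w - v) '' F ∪ S)) := by
  simp only [coneGen_eq_hull] at hproper ⊢
  exact Subset.antisymm
    (subset_iInter₂ fun v _ => convexHull_add_hull_subset_vadd_hull F S v)
    (iInter_vadd_hull_subset_convexHull_add_hull hFfin hFne
      (isClosed_hull_of_finite hSfin hproper))

/-- Theorem 4.7 (abstract convex-geometric content): the sum of a polytope `conv F` and
a proper finitely generated cone `cone S` equals the intersection over `v ∈ F` of the
translated cones generated by `F - v` together with `S`. -/
theorem polytope_add_proper_cone_eq_iInter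
    {V : Type*} [NormedAddCommGroup V] [NormedSpace ℝ V] [FiniteDimensional ℝ V]
    (F : Set V) (hFfin : F.Finite) (hFne : F.Nonempty)
    (S : Set V) (hSfin : S.Finite)
    (hproper : ∀ u ∈ coneGen S, -u ∈ coneGen S → u = 0) :
    convexHull ℝ F + coneGen S =
      ⋂ v ∈ F, (v +ᵥ coneGen ((fun w => w - v) '' F ∪ S)) :=
  polytope_add_proper_cone_eq_iInter_general F hFfin hFne S hSfin hproper
end

section
/- Let V be a finite-dimensional real normed vector space, F ⊆ V a finite nonempty set, and S ⊆ V a finite set such that cone(S) is a proper cone. Then for every v ∈ F there exists a neighborhood U of v in V such that (conv(F) + cone(S)) ∩ U = ( v + cone({w − v : w ∈ F} ∪ S) ) ∩ U; i.e., the local cone of conv(F) + cone(S) at v is the cone generated by {w − v : w ∈ F} ∪ S. -/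
/-!
Near `v`, write `x - v ∈ cone T`, `T = (F - v) ∪ S`, by the conic Carathéodory theorem as a
nonnegative combination of linearly independent vectors of `T`. There are finitely many such
families, and on each one the coefficients are bounded by a fixed multiple of `‖x - v‖`; so for
`x` close to `v` they sum to at most `1`, i.e. `x - v ∈ conv (T ∪ {0})`. That hull lies in
`conv F + cone S - v` because `v ∈ F`. The other inclusion holds globally, since
`conv F ⊆ v + cone (F - v)`.
-/

open Pointwise

open Filter Set

lemma Convex.sum_smul_mem_of_zero_mem {V ι : Type*} [AddCommGroup V] [Module ℝ V] {K : Set V}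
    (hK : Convex ℝ K) (h0 : (0 : V) ∈ K)
    {t : Finset ι} {d : ι → ℝ} {z : ι → V} (hd : ∀ i ∈ t, 0 ≤ d i) (hd1 : ∑ i ∈ t, d i ≤ 1)
    (hz : ∀ i ∈ t, z i ∈ K) : ∑ i ∈ t, d i • z i ∈ K := by
  rcases (Finset.sum_nonneg hd).eq_or_lt with hσ | hσ
  · rw [Finset.sum_eq_zero fun i hi => by
      rw [(Finset.sum_eq_zero_iff_of_nonneg hd).1 hσ.symm i hi, zero_smul]]
    exact h0
  have hmem : ∑ i ∈ t, (d i / ∑ j ∈ t, d j) • z i ∈ K :=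
    hK.sum_mem (fun i hi => div_nonneg (hd i hi) hσ.le)
      (by rw [← Finset.sum_div, div_self hσ.ne']) hz
  convert hK.smul_mem_of_zero_mem h0 hmem ⟨hσ.le, hd1⟩ using 1
  simp only [Finset.smul_sum, smul_smul, mul_div_cancel₀ _ hσ.ne']

section ConeGen

variable {V : Type*} [AddCommGroup V] [Module ℝ V] {S T : Set V} {x y : V}

lemma zero_mem_coneGen (S : Set V) : (0 : V) ∈ coneGen S :=
  ⟨0, ![], ![], by simp, by simp, by simp⟩

lemma subset_coneGen (S : Set V) : S ⊆ coneGen S := fun x hx =>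
  ⟨1, ![1], ![x], by simp, by simpa, by simp⟩

lemma coneGen_mono (h : S ⊆ T) : coneGen S ⊆ coneGen T := by
  rintro x ⟨n, c, s, hc, hs, rfl⟩
  exact ⟨n, c, s, hc, fun i => h (hs i), rfl⟩

lemma add_mem_coneGen (hx : x ∈ coneGen S) (hy : y ∈ coneGen S) : x + y ∈ coneGen S := by
  obtain ⟨n, c, s, hc, hs, rfl⟩ := hx
  obtain ⟨m, d, t, hd, ht, rfl⟩ := hy
  refine ⟨n + m, Fin.append c d, Fin.append s t, Fin.addCases ?_ ?_, Fin.addCases ?_ ?_, ?_⟩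
  all_goals simp [Fin.sum_univ_add, hc, hd, hs, ht]

lemma smul_mem_coneGen {a : ℝ} (ha : 0 ≤ a) (hx : x ∈ coneGen S) : a • x ∈ coneGen S := by
  obtain ⟨n, c, s, hc, hs, rfl⟩ := hx
  exact ⟨n, a • c, s, fun i => mul_nonneg ha (hc i), hs, by simp [Finset.smul_sum, mul_smul]⟩

lemma convex_coneGen (S : Set V) : Convex ℝ (coneGen S) :=
  fun _ hx _ hy _ _ ha hb _ => add_mem_coneGen (smul_mem_coneGen ha hx) (smul_mem_coneGen hb hy)

end ConeGen

section Caratheodory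

variable {V : Type*} [AddCommGroup V] [Module ℝ V]

/-- Shift the coefficients along a linear relation with a positive entry until the first one
hits zero. -/
lemma exists_nonneg_coeff_eq_zero_of_not_linearIndependent {ι : Type*} [Fintype ι]
    {t : ι → V} (ht : ¬LinearIndependent ℝ t) {c : ι → ℝ} (hc : ∀ i, 0 ≤ c i) :
    ∃ c' : ι → ℝ, (∀ i, 0 ≤ c' i) ∧ (∃ i, c' i = 0) ∧ ∑ i, c' i • t i = ∑ i, c i • t i := by
  classical
  obtain ⟨g, hg, i₂, hgi₂⟩ : ∃ g : ι → ℝ, ∑ i, g i • t i = 0 ∧ ∃ i, 0 < g i := by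
    obtain ⟨g₀, hg₀, i₁, hgi₁⟩ := Fintype.not_linearIndependent_iff.1 ht
    rcases hgi₁.lt_or_gt with h | h
    · exact ⟨-g₀, by simp [hg₀], i₁, by simpa using h⟩
    · exact ⟨g₀, hg₀, i₁, h⟩
  obtain ⟨i₀, hi₀, hmin⟩ := ({i | 0 < g i} : Finset ι).exists_min_image (fun i => c i / g i)
    ⟨i₂, by simpa using hgi₂⟩
  simp only [Finset.mem_filter, Finset.mem_univ, true_and] at hi₀ hmin
  set α := c i₀ / g i₀
  have hα : 0 ≤ α := div_nonneg (hc i₀) hi₀.le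
  refine ⟨fun i => c i - α * g i, fun i => ?_, ⟨i₀, by simp [α, hi₀.ne']⟩, ?_⟩
  · rcases lt_or_ge 0 (g i) with h | h
    · have := (le_div_iff₀ h).1 (hmin i h)
      linarith
    · linarith [hc i, mul_nonpos_of_nonneg_of_nonpos hα h]
  · simp [sub_smul, Finset.sum_sub_distrib, mul_smul, ← Finset.smul_sum, hg]

lemma exists_linearIndependent_of_mem_coneGen {T : Set V} {x : V} (hx : x ∈ coneGen T) :
    ∃ (m : ℕ) (d : Fin m → ℝ) (s : Fin m → V), LinearIndependent ℝ s ∧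
      (∀ i, 0 ≤ d i) ∧ (∀ i, s i ∈ T) ∧ x = ∑ i, d i • s i := by
  obtain ⟨n, c, t, hc, ht, rfl⟩ := hx
  induction n with
  | zero => exact ⟨0, ![], ![], linearIndependent_empty_type, by simp, by simp, by simp⟩
  | succ n ih =>
    by_cases hli : LinearIndependent ℝ t
    · exact ⟨n + 1, c, t, hli, hc, ht, rfl⟩
    obtain ⟨c', hc', ⟨i₀, hi₀⟩, hsum⟩ :=
      exists_nonneg_coeff_eq_zero_of_not_linearIndependent hli hc
    rw [← hsum, Fin.sum_univ_succAbove _ i₀, hi₀, zero_smul, zero_add]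
    exact ih (c' ∘ i₀.succAbove) (t ∘ i₀.succAbove) (fun i => hc' _) (fun i => ht _)

end Caratheodory

section Normed

variable {V : Type*} [NormedAddCommGroup V] [NormedSpace ℝ V]

lemma LinearIndependent.eventually_sum_abs_le_mul_norm {ι : Type*} [Fintype ι] {s : ι → V}
    (hs : LinearIndependent ℝ s) :
    ∀ᶠ C in atTop, ∀ c : ι → ℝ, ∑ i, |c i| ≤ C * ‖∑ i, c i • s i‖ := by
  obtain ⟨K, -, hK⟩ := (Fintype.linearCombination ℝ s).exists_antilipschitzWith
    (LinearMap.ker_eq_bot.2 (linearIndependent_iff_injective_fintypeLinearCombination.1 hs))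
  filter_upwards [eventually_ge_atTop (Fintype.card ι * (K : ℝ))] with C hC c
  calc ∑ i, |c i| ≤ Fintype.card ι * ‖c‖ := by
        simpa using Finset.sum_le_card_nsmul Finset.univ (fun i => |c i|) ‖c‖
          fun i _ => norm_le_pi_norm c i
    _ ≤ Fintype.card ι * (K * ‖∑ i, c i • s i‖) := by
        gcongr
        simpa [Fintype.linearCombination_apply] using hK.le_mul_norm (map_zero _) c
    _ ≤ C * ‖∑ i, c i • s i‖ := by rw [← mul_assoc]; gcongr

lemma eventually_sum_abs_le_mul_norm_of_finite [FiniteDimensional ℝ V] {T : Set V}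
    (hT : T.Finite) :
    ∀ᶠ C in atTop, ∀ (m : ℕ) (s : Fin m → V), LinearIndependent ℝ s → (∀ i, s i ∈ T) →
      ∀ c : Fin m → ℝ, ∑ i, |c i| ≤ C * ‖∑ i, c i • s i‖ := by
  have h : ∀ᶠ C in atTop, ∀ m ∈ Iic (Module.finrank ℝ V), ∀ s ∈ univ.pi fun _ : Fin m => T,
      LinearIndependent ℝ s → ∀ c : Fin m → ℝ, ∑ i, |c i| ≤ C * ‖∑ i, c i • s i‖ :=
    (finite_Iic _).eventually_all.2 fun m _ => (Finite.pi fun _ => hT).eventually_all.2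
      fun s _ => eventually_imp_distrib_left.2 LinearIndependent.eventually_sum_abs_le_mul_norm
  filter_upwards [h] with C hC m s hs hsT
  exact hC m (by simpa using hs.fintype_card_le_finrank) s (fun i _ => hsT i) hs

lemma exists_pos_mem_convexHull_insert_zero_of_norm_lt [FiniteDimensional ℝ V] {T : Set V}
    (hT : T.Finite) :
    ∃ ε > 0, ∀ u ∈ coneGen T, ‖u‖ < ε → u ∈ convexHull ℝ (insert 0 T) := by
  obtain ⟨C, hC, hbound⟩ :=
    ((eventually_gt_atTop 0).and (eventually_sum_abs_le_mul_norm_of_finite hT)).exists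
  refine ⟨C⁻¹, inv_pos.2 hC, fun u hu hnorm => ?_⟩
  obtain ⟨m, d, s, hs, hd, hsT, rfl⟩ := exists_linearIndependent_of_mem_coneGen hu
  have hd1 : ∑ i, d i ≤ 1 := calc
    ∑ i, d i ≤ ∑ i, |d i| := Finset.sum_le_sum fun i _ => le_abs_self _
    _ ≤ C * ‖∑ i, d i • s i‖ := hbound m s hs hsT d
    _ ≤ C * C⁻¹ := by gcongr
    _ = 1 := mul_inv_cancel₀ hC.ne'
  exact (convex_convexHull ℝ _).sum_smul_mem_of_zero_mem (subset_convexHull ℝ _ (mem_insert _ _))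
    (fun i _ => hd i) hd1 fun i _ => subset_convexHull ℝ _ (mem_insert_of_mem _ (hsT i))

end Normed

section LocalCone

variable {V : Type*} [AddCommGroup V] [Module ℝ V]

lemma convexHull_add_coneGen_subset_vadd (F S : Set V) (v : V) :
    convexHull ℝ F + coneGen S ⊆ v +ᵥ coneGen ((· - v) '' F ∪ S) := by
  have hF : convexHull ℝ F ⊆ v +ᵥ coneGen ((· - v) '' F ∪ S) :=
    convexHull_min (fun w hw => ⟨w - v, subset_coneGen _ (.inl ⟨w, hw, rfl⟩), by simp⟩)
      ((convex_coneGen _).vadd v)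
  rintro _ ⟨_, hp, c, hc, rfl⟩
  obtain ⟨u, hu, rfl⟩ := hF hp
  exact ⟨u + c, add_mem_coneGen hu (coneGen_mono subset_union_right hc), by simp [add_assoc]⟩

lemma vadd_convexHull_insert_zero_subset {F S : Set V} {v : V} (hv : v ∈ F) :
    v +ᵥ convexHull ℝ (insert 0 ((· - v) '' F ∪ S)) ⊆ convexHull ℝ F + coneGen S := by
  rintro _ ⟨u, hu, rfl⟩
  have hK : Convex ℝ {u | v + u ∈ convexHull ℝ F + coneGen S} :=
    ((convex_convexHull ℝ F).add (convex_coneGen S)).translate_preimage_right v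
  refine convexHull_min (insert_subset ?_ (union_subset ?_ ?_)) hK hu
  · exact ⟨v, subset_convexHull ℝ F hv, 0, zero_mem_coneGen S, by simp⟩
  · rintro _ ⟨w, hw, rfl⟩
    exact ⟨w, subset_convexHull ℝ F hw, 0, zero_mem_coneGen S, by simp⟩
  · exact fun s hs => ⟨v, subset_convexHull ℝ F hv, s, subset_coneGen S hs, rfl⟩

end LocalCone

theorem local_cone_of_polytope_add_proper_cone_general
    {V : Type*} [NormedAddCommGroup V] [NormedSpace ℝ V] [FiniteDimensional ℝ V]
    (F : Set V) (hFfin : F.Finite)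
    (S : Set V) (hSfin : S.Finite) :
    ∀ v ∈ F, ∃ U ∈ nhds v,
      (convexHull ℝ F + coneGen S) ∩ U =
        (v +ᵥ coneGen ((fun w => w - v) '' F ∪ S)) ∩ U := by
  intro v hv
  obtain ⟨ε, hε, hlocal⟩ :=
    exists_pos_mem_convexHull_insert_zero_of_norm_lt ((hFfin.image (· - v)).union hSfin)
  refine ⟨Metric.ball v ε, Metric.ball_mem_nhds v hε,
    inter_subset_inter_left _ (convexHull_add_coneGen_subset_vadd F S v) |>.antisymm ?_⟩
  rintro x ⟨hx, hxv⟩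
  refine ⟨?_, hxv⟩
  have hx' : x - v ∈ coneGen ((· - v) '' F ∪ S) := by
    simpa [mem_vadd_set_iff_neg_vadd_mem, sub_eq_neg_add] using hx
  simpa using vadd_convexHull_insert_zero_subset hv
    (vadd_mem_vadd_set (hlocal _ hx' (mem_ball_iff_norm.1 hxv)))

/-- The local cone of `conv F + cone S` at a point `v ∈ F` is the cone generated by
`{w - v : w ∈ F} ∪ S`. -/
theorem local_cone_of_polytope_add_proper_cone
    {V : Type*} [NormedAddCommGroup V] [NormedSpace ℝ V] [FiniteDimensional ℝ V]
    (F : Set V) (hFfin : F.Finite) (hFne : F.Nonempty)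
    (S : Set V) (hSfin : S.Finite)
    (hproper : ∀ u ∈ coneGen S, -u ∈ coneGen S → u = 0) :
    ∀ v ∈ F, ∃ U ∈ nhds v,
      (convexHull ℝ F + coneGen S) ∩ U =
        (v +ᵥ coneGen ((fun w => w - v) '' F ∪ S)) ∩ U :=
  local_cone_of_polytope_add_proper_cone_general F hFfin S hSfin
end

section
/- Let V be a finite-dimensional real normed vector space, K ⊆ V a compact set, and Γ ⊆ V a closed convex proper cone. Then there exist x ∈ V and a closed convex proper cone Γ' ⊆ V such that K + Γ ⊆ x + Γ'. -/
open Pointwise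

/-!
Every closed convex proper cone `Γ` in finite dimension lies in a Bishop–Phelps cone
`{v | ε * ‖v‖ ≤ f v}`: by Hahn–Banach each unit vector of `Γ` is made positive by a functional
nonnegative on `Γ`, compactness of the unit sphere of `Γ` lets finitely many of them suffice, and
their sum `f` satisfies `‖v‖ ≤ f v` on `Γ`. A Bishop–Phelps cone with `ε > 0` is a closed convex
proper cone; after halving `ε` every nonzero vector of `Γ` is an interior point, so a translate of
it swallows the bounded set `K`, and since it is closed under addition that translate also
contains `K + Γ`.
-/

open Set Bornology

lemma IsCone.add_mem_s10 {V : Type*} [AddCommGroup V] [Module ℝ V] {Γ : Set V} (hΓ : IsCone Γ)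
    (hconv : Convex ℝ Γ) {x y : V} (hx : x ∈ Γ) (hy : y ∈ Γ) : x + y ∈ Γ := by
  have hmid : (2⁻¹ : ℝ) • x + (2⁻¹ : ℝ) • y ∈ Γ :=
    hconv hx hy (by norm_num) (by norm_num) (by norm_num)
  convert hΓ.2 2 zero_le_two _ hmid using 1
  rw [smul_add, smul_smul, smul_smul]
  norm_num

section LocallyConvex

variable {E : Type*} [TopologicalSpace E] [AddCommGroup E] [IsTopologicalAddGroup E] [Module ℝ E]
  [ContinuousSMul ℝ E] [LocallyConvexSpace ℝ E]

lemma IsProperCone.exists_forall_nonneg_and_one_lt {Γ : Set E} (hΓ : IsProperCone Γ)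
    (hclosed : IsClosed Γ) (hconv : Convex ℝ Γ) {v : E} (hvΓ : v ∈ Γ) (hv : v ≠ 0) :
    ∃ g : StrongDual ℝ E, (∀ γ ∈ Γ, 0 ≤ g γ) ∧ 1 < g v := by
  obtain ⟨f, u, hfv, hfΓ⟩ :=
    geometric_hahn_banach_point_closed hconv hclosed fun h => hv (hΓ.2 v hvΓ h)
  have hu : u < 0 := by simpa using hfΓ 0 hΓ.1.1
  -- Were `f γ < 0`, the point `(u / f γ) • γ` of `Γ` would have value exactly `u`.
  have hfΓ_nonneg : ∀ γ ∈ Γ, 0 ≤ f γ := by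
    intro γ hγ
    by_contra! hneg
    have := hfΓ _ (hΓ.1.2 (u / f γ) (div_nonneg_of_nonpos hu.le hneg.le) γ hγ)
    rw [map_smul, smul_eq_mul, div_mul_cancel₀ _ hneg.ne] at this
    exact lt_irrefl u this
  refine ⟨(-u)⁻¹ • f, fun γ hγ => ?_, ?_⟩
  · simpa using mul_nonneg (inv_nonneg.2 (neg_nonneg.2 hu.le)) (hfΓ_nonneg γ hγ)
  · rw [map_neg] at hfv
    change 1 < (-u)⁻¹ * f v
    rw [one_lt_inv_mul₀ (neg_pos.2 hu)]
    linarith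

end LocallyConvex

section Normed

variable {V : Type*} [NormedAddCommGroup V] [NormedSpace ℝ V]

lemma IsProperCone.exists_forall_norm_le_apply [FiniteDimensional ℝ V] {Γ : Set V}
    (hΓ : IsProperCone Γ) (hclosed : IsClosed Γ) (hconv : Convex ℝ Γ) :
    ∃ f : V →L[ℝ] ℝ, ∀ v ∈ Γ, ‖v‖ ≤ f v := by
  set S := Γ ∩ Metric.sphere (0 : V) 1
  have hS : ∀ s : S, ∃ g : V →L[ℝ] ℝ, (∀ γ ∈ Γ, 0 ≤ g γ) ∧ 1 < g s := fun s =>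
    hΓ.exists_forall_nonneg_and_one_lt hclosed hconv s.2.1 fun h => by simpa [h] using s.2.2
  choose g hgΓ hgs using hS
  have hScompact : IsCompact S := (isCompact_sphere (0 : V) 1).inter_left hclosed
  obtain ⟨t, hSt⟩ := hScompact.elim_finite_subcover (fun s => {x | 1 < g s x})
    (fun s => isOpen_lt continuous_const (g s).continuous)
    fun s hs => mem_iUnion.2 ⟨⟨s, hs⟩, hgs _⟩
  have hSf : ∀ u ∈ S, 1 ≤ ∑ s ∈ t, g s u := by
    intro u hu
    obtain ⟨s, hst, hsu⟩ := mem_iUnion₂.1 (hSt hu)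
    exact hsu.le.trans (Finset.single_le_sum (fun s _ => hgΓ s u hu.1) hst)
  refine ⟨∑ s ∈ t, g s, fun v hv => ?_⟩
  rcases eq_or_ne v 0 with rfl | hv0
  · simp
  have hvpos : 0 < ‖v‖ := norm_pos_iff.2 hv0
  have hunit : ‖v‖⁻¹ • v ∈ S :=
    ⟨hΓ.1.2 _ (inv_nonneg.2 hvpos.le) v hv, by simp [norm_smul, hvpos.ne']⟩
  have := hSf _ hunit
  simp only [FunLike.coe_sum, Finset.sum_apply, map_smul, smul_eq_mul,
    ← Finset.mul_sum] at this ⊢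
  rwa [le_inv_mul_iff₀ hvpos, mul_one] at this

def bishopPhelpsCone (f : V →L[ℝ] ℝ) (ε : ℝ) : Set V := {v | ε * ‖v‖ ≤ f v}

lemma isClosed_bishopPhelpsCone (f : V →L[ℝ] ℝ) (ε : ℝ) :
    IsClosed (bishopPhelpsCone f ε) :=
  isClosed_le (continuous_const.mul continuous_norm) f.continuous

lemma convex_bishopPhelpsCone (f : V →L[ℝ] ℝ) {ε : ℝ} (hε : 0 ≤ ε) :
    Convex ℝ (bishopPhelpsCone f ε) := by
  intro a ha b hb s t hs ht _
  calc ε * ‖s • a + t • b‖ ≤ s * (ε * ‖a‖) + t * (ε * ‖b‖) := by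
        nlinarith [norm_add_le (s • a) (t • b), norm_smul_of_nonneg hs a,
          norm_smul_of_nonneg ht b]
    _ ≤ s * f a + t * f b := by gcongr <;> assumption
    _ = f (s • a + t • b) := by simp

lemma isProperCone_bishopPhelpsCone (f : V →L[ℝ] ℝ) {ε : ℝ} (hε : 0 < ε) :
    IsProperCone (bishopPhelpsCone f ε) := by
  refine ⟨⟨by simp [bishopPhelpsCone], fun r hr v hv => ?_⟩, fun v hv hnv => ?_⟩
  · change ε * ‖r • v‖ ≤ f (r • v)
    rw [norm_smul_of_nonneg hr, map_smul, smul_eq_mul, mul_left_comm]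
    exact mul_le_mul_of_nonneg_left hv hr
  · change ε * ‖-v‖ ≤ f (-v) at hnv
    rw [norm_neg, map_neg] at hnv
    have : ε * ‖v‖ ≤ 0 := by linarith [hv.out]
    exact norm_le_zero_iff.1 (nonpos_of_mul_nonpos_right this hε)

lemma mem_interior_bishopPhelpsCone {f : V →L[ℝ] ℝ} {ε : ℝ} {w : V}
    (hw : ε * ‖w‖ < f w) : w ∈ interior (bishopPhelpsCone f ε) := by
  have hopen : IsOpen {v : V | ε * ‖v‖ < f v} :=
    isOpen_lt (continuous_const.mul continuous_norm) f.continuous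
  exact hopen.subset_interior_iff.2 (fun v (hv : ε * ‖v‖ < f v) => hv.le) hw

lemma IsProperCone.exists_subset_bishopPhelpsCone [FiniteDimensional ℝ V] [Nontrivial V]
    {Γ : Set V} (hΓ : IsProperCone Γ) (hclosed : IsClosed Γ) (hconv : Convex ℝ Γ) :
    ∃ (f : V →L[ℝ] ℝ) (ε : ℝ), 0 < ε ∧ Γ ⊆ bishopPhelpsCone f ε ∧
      (interior (bishopPhelpsCone f ε)).Nonempty := by
  by_cases htriv : Γ ⊆ {0}
  · obtain ⟨w, hw⟩ := exists_ne (0 : V)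
    obtain ⟨g, -, hgw⟩ := exists_dual_vector ℝ w (norm_ne_zero_iff.2 hw)
    refine ⟨g, 2⁻¹, by norm_num, fun v hv => ?_, w, mem_interior_bishopPhelpsCone ?_⟩
    · obtain rfl := htriv hv
      simp [bishopPhelpsCone]
    · rw [show g w = ‖w‖ by simpa using hgw]
      linarith [norm_pos_iff.2 hw]
  · obtain ⟨w, hwΓ, hw⟩ := not_subset.1 htriv
    obtain ⟨f, hf⟩ := hΓ.exists_forall_norm_le_apply hclosed hconv
    refine ⟨f, 2⁻¹, by norm_num, fun v hv => ?_, w, mem_interior_bishopPhelpsCone ?_⟩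
    · change 2⁻¹ * ‖v‖ ≤ f v
      linarith [hf v hv, norm_nonneg v]
    · linarith [hf w hwΓ, norm_pos_iff.2 hw]

lemma IsCone.exists_subset_vadd_of_isBounded {C K : Set V} (hC : IsCone C)
    (hCint : (interior C).Nonempty) (hK : IsBounded K) : ∃ x : V, K ⊆ x +ᵥ C := by
  obtain ⟨w, hw⟩ := hCint
  obtain ⟨r, hr, hball⟩ := Metric.isOpen_iff.1 isOpen_interior w hw
  obtain ⟨R, hR, hKR⟩ := hK.subset_closedBall_lt 0 0
  set t := R / r + 1
  have ht : 0 < t := by positivity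
  refine ⟨-(t • w), fun k hk => ?_⟩
  -- `k + t • w = t • (w + t⁻¹ • k)` and `w + t⁻¹ • k` is within `R / t < r` of `w`.
  have hnear : w + t⁻¹ • k ∈ Metric.ball w r := by
    rw [Metric.mem_ball, dist_eq_norm, add_sub_cancel_left,
      norm_smul_of_nonneg (inv_nonneg.2 ht.le), inv_mul_lt_iff₀ ht]
    calc ‖k‖ ≤ R := by simpa using hKR hk
      _ < t * r := by rw [add_mul, div_mul_cancel₀ _ hr.ne']; linarith
  rw [mem_vadd_set_iff_neg_vadd_mem, neg_neg, vadd_eq_add]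
  convert hC.2 t ht.le _ (interior_subset (hball hnear)) using 1
  rw [smul_add, smul_inv_smul₀ ht.ne']

end Normed

/-- The sum of a compact set and a closed convex proper cone is contained in a translate
of a closed convex proper cone. -/
theorem compact_add_proper_cone_subset_translate_proper_cone
    {V : Type*} [NormedAddCommGroup V] [NormedSpace ℝ V] [FiniteDimensional ℝ V]
    (K : Set V) (hK : IsCompact K)
    (Γ : Set V) (hΓclosed : IsClosed Γ) (hΓconv : Convex ℝ Γ)
    (hΓproper : IsProperCone Γ) :
    ∃ (x : V) (Γ' : Set V), IsClosed Γ' ∧ Convex ℝ Γ' ∧ IsProperCone Γ' ∧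
      K + Γ ⊆ x +ᵥ Γ' := by
  rcases subsingleton_or_nontrivial V with hV | hV
  · refine ⟨0, Γ, hΓclosed, hΓconv, hΓproper, fun a _ => ?_⟩
    simpa [Subsingleton.elim a 0] using hΓproper.1.1
  obtain ⟨f, ε, hε, hΓf, hint⟩ := hΓproper.exists_subset_bishopPhelpsCone hΓclosed hΓconv
  have hΓ' := isProperCone_bishopPhelpsCone f hε
  have hconv' := convex_bishopPhelpsCone f hε.le
  obtain ⟨x, hKx⟩ := hΓ'.1.exists_subset_vadd_of_isBounded hint hK.isBounded
  refine ⟨x, _, isClosed_bishopPhelpsCone f ε, hconv', hΓ', ?_⟩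
  rintro _ ⟨k, hk, v, hv, rfl⟩
  have hk' := hKx hk
  rw [mem_vadd_set_iff_neg_vadd_mem, vadd_eq_add] at hk' ⊢
  rw [← add_assoc]
  exact hΓ'.1.add_mem_s10 hconv' hk' (hΓf hv)
end
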